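/- Suppose each of n parties holds c_i ∈ {0,1}, and sets x_i = 0 if c_i = 1 and x_i ∈ {1,...,M} arbitrary if c_i = 0. If 2^m > n·M and q is odd, then z = q·(Σ x_i) mod 2^m satisfies: z = 0 if and only if c_0 = c_1 = ... = c_{n-1} = 1 (equivalently, ∏ c_i = 1). -/
import Mathlib

theorem stmt_5 (n M m : ℕ) (hn : 0 < n) (hM : 0 < M) (hm : 0 < m)
    (hpow : n * M < 2 ^ m) (c : Fin n → Fin 2) (x : Fin n → ℕ)
    (h1 : ∀ i, c i = 1 → x i = 0) (h0 : ∀ i, c i = 0 → 1 ≤ x i ∧ x i ≤ M)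
    (q : ℕ) (hq : Odd q) :
    (q * ∑ i, x i) % 2 ^ m = 0 ↔ ∀ i, c i = 1 := by
  constructor
  · intro h i
    have hdvd : 2 ^ m ∣ q * ∑ i, x i := Nat.dvd_of_mod_eq_zero h
    have hcop : Nat.Coprime (2 ^ m) q := by
      have : Nat.Coprime 2 q := (Nat.coprime_two_left).mpr hq
      exact this.pow_left m
    have hdvds : 2 ^ m ∣ ∑ i, x i := (Nat.Coprime.dvd_of_dvd_mul_left hcop) hdvd
    have hle : ∑ i, x i ≤ n * M := by
      calc ∑ i, x i ≤ ∑ _i : Fin n, M := by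
            apply Finset.sum_le_sum
            intro j _
            rcases (show c j = 0 ∨ c j = 1 from Or.imp Fin.eq_of_val_eq Fin.eq_of_val_eq (by omega)) with hc | hc
            · exact (h0 j hc).2
            · rw [h1 j hc]; omega
        _ = n * M := by simp [mul_comm]
    have hsum0 : ∑ i, x i = 0 := by
      rcases Nat.eq_zero_or_pos (∑ i, x i) with h' | h'
      · exact h'
      · exact absurd (Nat.le_of_dvd h' hdvds) (by omega)
    have hx0 : x i = 0 := by
      have := Finset.sum_eq_zero_iff.mp hsum0 i (Finset.mem_univ i)
      exact this
    rcases (show c i = 0 ∨ c i = 1 from Or.imp Fin.eq_of_val_eq Fin.eq_of_val_eq (by omega)) with hc | hc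
    · have := (h0 i hc).1; omega
    · exact hc
  · intro h
    have : ∑ i, x i = 0 := Finset.sum_eq_zero (fun i _ => h1 i (h i))
    simp [this]
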